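/- arXiv:1908.09472 — 7 statements merged into one kernel-verified Lean document; each statement's English description precedes it below -/
import Mathlib

section
/- (Lemma 1) Let x : ℕ → ℝⁿ satisfy x(k+1) = A·x(0) + W·x(k) for all k ∈ ℕ. Then for every m ∈ ℕ, W·P = Q, where P := Σ_{k=0}^{m−1} (x(k+1) − x(k))·(x(k+1) − x(k))ᵀ and Q := Σ_{k=0}^{m−1} (x(k+2) − x(k+1))·(x(k+1) − x(k))ᵀ. -/
/-- Lemma 1: for the dynamics x(k+1) = A·x(0) + W·x(k) and data matrices
P := Σ_{k=0}^{m−1} (x(k+1) − x(k))·(x(k+1) − x(k))ᵀ and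
Q := Σ_{k=0}^{m−1} (x(k+2) − x(k+1))·(x(k+1) − x(k))ᵀ, we have W·P = Q. -/
theorem lemma1_WP_eq_Q (n : ℕ) (A W : Matrix (Fin n) (Fin n) ℝ)
    (x : ℕ → Fin n → ℝ)
    (hdyn : ∀ k : ℕ, x (k + 1) = A.mulVec (x 0) + W.mulVec (x k)) :
    ∀ m : ℕ,
      W * (∑ k ∈ Finset.range m,
            Matrix.vecMulVec (x (k + 1) - x k) (x (k + 1) - x k)) =
        ∑ k ∈ Finset.range m,
          Matrix.vecMulVec (x (k + 2) - x (k + 1)) (x (k + 1) - x k) := by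
  intro m
  rw [Finset.mul_sum]
  refine Finset.sum_congr rfl fun k _ => ?_
  have hstep : x (k + 2) - x (k + 1) = W.mulVec (x (k + 1) - x k) := by
    rw [Matrix.mulVec_sub, hdyn (k + 1), hdyn k]
    abel
  rw [hstep]
  ext i j
  simp [Matrix.mul_apply, Matrix.vecMulVec_apply, Matrix.mulVec, dotProduct,
    Finset.sum_mul, mul_assoc]
end

section
/- (Lemma 2) Let x : ℕ → ℝⁿ satisfy x(k+1) = A·x(0) + W·x(k) for all k ∈ ℕ, and set L := A + W − I. Then for every m ∈ ℕ and every vector w ∈ ℝⁿ: P·w = 0 if and only if ⟨W^k·L·x(0), w⟩ = 0 for every k ∈ {0, 1, …, m−1}; that is, the kernel of P equals the kernel of the m×n matrix whose k-th row is (W^k·L·x(0))ᵀ. -/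
open Matrix

/-! Unrolling the dynamics, the increments are `x (k+1) - x k = W^k L x(0)`, so
`P = ∑ₖ vₖ vₖᵀ` with `vₖ = W^k L x(0)`. Hence `wᵀ P w = ∑ₖ ⟨vₖ, w⟩²`, which vanishes
exactly when every `⟨vₖ, w⟩` does, and then `P w = ∑ₖ ⟨vₖ, w⟩ vₖ = 0`. -/

namespace Matrix

variable {ι n R : Type*} [Fintype n]

theorem sub_eq_pow_mul_mulVec_of_affine_recurrence [DecidableEq n] [CommRing R]
    {A W : Matrix n n R} {x : ℕ → n → R}
    (hdyn : ∀ k, x (k + 1) = A *ᵥ x 0 + W *ᵥ x k) (k : ℕ) :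
    x (k + 1) - x k = (W ^ k * (A + W - 1)) *ᵥ x 0 := by
  induction k with
  | zero =>
    rw [pow_zero, one_mul, hdyn 0, sub_mulVec, add_mulVec, one_mulVec]
  | succ k ih =>
    have hstep : x (k + 2) - x (k + 1) = W *ᵥ (x (k + 1) - x k) := by
      rw [hdyn (k + 1), hdyn k, mulVec_sub]
      abel
    rw [hstep, ih, mulVec_mulVec, ← mul_assoc, ← pow_succ']

theorem sum_vecMulVec_self_mulVec_eq_zero_iff [Field R] [LinearOrder R] [IsStrictOrderedRing R]
    (s : Finset ι) (v : ι → n → R) (w : n → R) :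
    (∑ k ∈ s, vecMulVec (v k) (v k)) *ᵥ w = 0 ↔ ∀ k ∈ s, v k ⬝ᵥ w = 0 := by
  have hPw : (∑ k ∈ s, vecMulVec (v k) (v k)) *ᵥ w = ∑ k ∈ s, (v k ⬝ᵥ w) • v k := by
    simp only [sum_mulVec, vecMulVec_mulVec, op_smul_eq_smul]
  rw [hPw]
  constructor
  · intro h
    have hquad : ∑ k ∈ s, (v k ⬝ᵥ w) * (v k ⬝ᵥ w) = 0 := by
      simpa only [sum_dotProduct, smul_dotProduct, smul_eq_mul, zero_dotProduct]
        using congrArg (· ⬝ᵥ w) h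
    intro k hk
    exact mul_self_eq_zero.mp <|
      (Finset.sum_eq_zero_iff_of_nonneg fun j _ => mul_self_nonneg _).mp hquad k hk
  · intro h
    exact Finset.sum_eq_zero fun k hk => by rw [h k hk, zero_smul]

end Matrix

/-- Lemma 2: for the dynamics x(k+1) = A·x(0) + W·x(k) with L := A + W − I and
P := Σ_{k=0}^{m−1} (x(k+1) − x(k))·(x(k+1) − x(k))ᵀ, a vector w lies in the
kernel of P iff ⟨W^k·L·x(0), w⟩ = 0 for every k ∈ {0, …, m−1}. -/
theorem lemma2_ker_P (n : ℕ) (A W : Matrix (Fin n) (Fin n) ℝ)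
    (x : ℕ → Fin n → ℝ)
    (hdyn : ∀ k : ℕ, x (k + 1) = A.mulVec (x 0) + W.mulVec (x k))
    (L : Matrix (Fin n) (Fin n) ℝ) (hL : L = A + W - 1) :
    ∀ m : ℕ, ∀ w : Fin n → ℝ,
      (∑ k ∈ Finset.range m,
          Matrix.vecMulVec (x (k + 1) - x k) (x (k + 1) - x k)).mulVec w = 0 ↔
        ∀ k < m, (W ^ k * L).mulVec (x 0) ⬝ᵥ w = 0 := by
  intro m w
  subst hL
  simp only [sub_eq_pow_mul_mulVec_of_affine_recurrence hdyn,
    sum_vecMulVec_self_mulVec_eq_zero_iff, Finset.mem_range]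
end

section
/- (Theorem 2, necessity direction) Let x : ℕ → ℝⁿ satisfy x(k+1) = A·x(0) + W·x(k) for all k ∈ ℕ, set L := A + W − I, and fix m ≥ 1 with data matrices P and Q. If an n×n real matrix W̄ satisfies W̄·P = Q, then (W̄ − W)·W^k·L·x(0) = 0 for every k ∈ {0, 1, …, m−1}; consequently, setting Ā := A − (W̄ − W), the sequence x also satisfies x(k+1) = Ā·x(0) + W̄·x(k) for every k ∈ {0, 1, …, m−1}. -/
/-!
The increments `d k = x (k+1) - x k` obey `d (k+1) = W d k` with `d 0 = L x(0)`, so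
`d k = W^k L x(0)` and `Q = W P`. Hence `W̄ P = Q` means `(W̄ - W) P = 0`, and multiplying
on the right by `(W̄ - W)ᵀ` gives `∑ₖ vₖ vₖᵀ = 0` with `vₖ = (W̄ - W) d k`; its diagonal is a
sum of squares, so every `vₖ` vanishes. Summing the `vₖ` telescopes to
`(W̄ - W) x(k) = (W̄ - W) x(0)`, which is exactly the correction absorbed by `Ā`.
-/

open Matrix

namespace Matrix

variable {ι κ l R : Type*} [Fintype ι]

theorem mulVec_eq_zero_of_mul_sum_vecMulVec_self_eq_zero
    [CommRing R] [LinearOrder R] [IsStrictOrderedRing R]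
    {s : Finset κ} (v : κ → ι → R) (M : Matrix l ι R)
    (h : M * ∑ k ∈ s, vecMulVec (v k) (v k) = 0) :
    ∀ k ∈ s, M *ᵥ v k = 0 := by
  have hsum : ∑ k ∈ s, vecMulVec (M *ᵥ v k) (M *ᵥ v k) = 0 := by
    rw [← Matrix.zero_mul Mᵀ, ← h, Matrix.mul_sum, Matrix.sum_mul]
    refine Finset.sum_congr rfl fun k _ => ?_
    rw [mul_vecMulVec, vecMulVec_mul, vecMul_transpose]
  intro k hk
  funext i
  have hdiag : ∑ j ∈ s, (M *ᵥ v j) i * (M *ᵥ v j) i = 0 := by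
    simpa [Matrix.sum_apply, vecMulVec_apply] using congrFun (congrFun hsum i) i
  exact mul_self_eq_zero.mp <|
    (Finset.sum_eq_zero_iff_of_nonneg fun j _ => mul_self_nonneg _).mp hdiag k hk

end Matrix

section OpinionDynamics

variable {ι R : Type*} [Fintype ι] [CommRing R]
  {A W : Matrix ι ι R} {x : ℕ → ι → R}

theorem increment_succ_eq_mulVec (hdyn : ∀ k, x (k + 1) = A *ᵥ x 0 + W *ᵥ x k) (k : ℕ) :
    x (k + 2) - x (k + 1) = W *ᵥ (x (k + 1) - x k) := by
  rw [hdyn (k + 1), hdyn k, mulVec_sub]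
  abel

theorem increment_eq_pow_mulVec [DecidableEq ι]
    (hdyn : ∀ k, x (k + 1) = A *ᵥ x 0 + W *ᵥ x k) (k : ℕ) :
    x (k + 1) - x k = (W ^ k * (A + W - 1)) *ᵥ x 0 := by
  induction k with
  | zero => simp [hdyn 0, sub_mulVec, add_mulVec]
  | succ k ih =>
    rw [increment_succ_eq_mulVec hdyn, ih, mulVec_mulVec, ← mul_assoc, ← pow_succ']

theorem mulVec_eq_mulVec_zero_of_mulVec_increment_eq_zero {M : Matrix ι ι R} {k : ℕ}
    (h : ∀ j < k, M *ᵥ (x (j + 1) - x j) = 0) : M *ᵥ x k = M *ᵥ x 0 := by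
  rw [← sub_eq_zero, ← mulVec_sub, ← Finset.sum_range_sub, mulVec_sum]
  exact Finset.sum_eq_zero fun j hj => h j (Finset.mem_range.mp hj)

theorem dynamics_eq_of_mulVec_eq_mulVec_zero {W' : Matrix ι ι R} {k : ℕ}
    (hdyn : ∀ k, x (k + 1) = A *ᵥ x 0 + W *ᵥ x k)
    (h : (W' - W) *ᵥ x k = (W' - W) *ᵥ x 0) :
    x (k + 1) = (A - (W' - W)) *ᵥ x 0 + W' *ᵥ x k := by
  rw [hdyn k, sub_mulVec A, ← h, sub_mulVec]
  abel

end OpinionDynamics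

theorem theorem2_necessity_general (n m : ℕ)
    (A W : Matrix (Fin n) (Fin n) ℝ) (x : ℕ → Fin n → ℝ)
    (hdyn : ∀ k : ℕ, x (k + 1) = A.mulVec (x 0) + W.mulVec (x k))
    (L : Matrix (Fin n) (Fin n) ℝ) (hL : L = A + W - 1)
    (P Q : Matrix (Fin n) (Fin n) ℝ)
    (hP : P = ∑ k ∈ Finset.range m,
      Matrix.vecMulVec (x (k + 1) - x k) (x (k + 1) - x k))
    (hQ : Q = ∑ k ∈ Finset.range m,
      Matrix.vecMulVec (x (k + 2) - x (k + 1)) (x (k + 1) - x k))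
    (W' : Matrix (Fin n) (Fin n) ℝ) (hW' : W' * P = Q) :
    (∀ k < m, ((W' - W) * W ^ k * L).mulVec (x 0) = 0) ∧
      (∀ k < m, x (k + 1) =
        (A - (W' - W)).mulVec (x 0) + W'.mulVec (x k)) := by
  have hQ_eq : Q = W * P := by
    simp only [hQ, hP, Finset.mul_sum, mul_vecMulVec, increment_succ_eq_mulVec hdyn]
  have hinc : ∀ k < m, (W' - W) *ᵥ (x (k + 1) - x k) = 0 :=
    fun k hk => mulVec_eq_zero_of_mul_sum_vecMulVec_self_eq_zero _ (W' - W)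
      (by rw [← hP, sub_mul, hW', hQ_eq, sub_self]) k (Finset.mem_range.mpr hk)
  refine ⟨fun k hk => ?_, fun k hk => ?_⟩
  · rw [mul_assoc, ← mulVec_mulVec, hL, ← increment_eq_pow_mulVec hdyn, hinc k hk]
  · exact dynamics_eq_of_mulVec_eq_mulVec_zero hdyn
      (mulVec_eq_mulVec_zero_of_mulVec_increment_eq_zero fun j hj => hinc j (hj.trans hk))

/-- Theorem 2 (necessity): if W̄·P = Q, then (W̄ − W)·W^k·L·x(0) = 0 for all
k ∈ {0, …, m−1}, and with Ā := A − (W̄ − W) the sequence x also satisfies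
x(k+1) = Ā·x(0) + W̄·x(k) for every k ∈ {0, …, m−1}. -/
theorem theorem2_necessity (n m : ℕ) (hm : 1 ≤ m)
    (A W : Matrix (Fin n) (Fin n) ℝ) (x : ℕ → Fin n → ℝ)
    (hdyn : ∀ k : ℕ, x (k + 1) = A.mulVec (x 0) + W.mulVec (x k))
    (L : Matrix (Fin n) (Fin n) ℝ) (hL : L = A + W - 1)
    (P Q : Matrix (Fin n) (Fin n) ℝ)
    (hP : P = ∑ k ∈ Finset.range m,
      Matrix.vecMulVec (x (k + 1) - x k) (x (k + 1) - x k))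
    (hQ : Q = ∑ k ∈ Finset.range m,
      Matrix.vecMulVec (x (k + 2) - x (k + 1)) (x (k + 1) - x k))
    (W' : Matrix (Fin n) (Fin n) ℝ) (hW' : W' * P = Q) :
    (∀ k < m, ((W' - W) * W ^ k * L).mulVec (x 0) = 0) ∧
      (∀ k < m, x (k + 1) =
        (A - (W' - W)).mulVec (x 0) + W'.mulVec (x k)) :=
  theorem2_necessity_general n m A W x hdyn L hL P Q hP hQ W' hW'
end

section
/- (Theorem 2, converse direction) Let x : ℕ → ℝⁿ satisfy x(k+1) = A·x(0) + W·x(k) for all k ∈ ℕ, set L := A + W − I, and fix m ≥ 1 with data matrices P and Q. If an n×n real matrix W̃ satisfies (W̃ − W)·W^k·L·x(0) = 0 for every k ∈ {0, 1, …, m−1}, then W̃·P = Q. In particular, if some W̃ ≠ W satisfies this condition, the equation X·P = Q does not have a unique n×n solution X. -/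
open Matrix

lemma mul_vecMulVec' {n : ℕ} (M : Matrix (Fin n) (Fin n) ℝ) (u v : Fin n → ℝ) :
    M * Matrix.vecMulVec u v = Matrix.vecMulVec (M.mulVec u) v := by
  ext i j
  simp only [Matrix.mul_apply, Matrix.vecMulVec_apply, Matrix.mulVec, dotProduct,
    Finset.sum_mul]
  exact Finset.sum_congr rfl fun k _ => by ring

lemma key_mulP {n m : ℕ}
    (A W : Matrix (Fin n) (Fin n) ℝ) (x : ℕ → Fin n → ℝ)
    (hdyn : ∀ k : ℕ, x (k + 1) = A.mulVec (x 0) + W.mulVec (x k))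
    (L : Matrix (Fin n) (Fin n) ℝ) (hL : L = A + W - 1)
    (W' : Matrix (Fin n) (Fin n) ℝ)
    (hker : ∀ k < m, ((W' - W) * W ^ k * L).mulVec (x 0) = 0) :
    W' * (∑ k ∈ Finset.range m,
      Matrix.vecMulVec (x (k + 1) - x k) (x (k + 1) - x k)) =
    ∑ k ∈ Finset.range m,
      Matrix.vecMulVec (x (k + 2) - x (k + 1)) (x (k + 1) - x k) := by
  have hdiff : ∀ k : ℕ, x (k + 1) - x k = (W ^ k * L).mulVec (x 0) := by
    intro k
    induction k with
    | zero =>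
      rw [pow_zero, one_mul, hL]
      ext i
      simp [hdyn 0, Matrix.add_mulVec, Matrix.sub_mulVec]
    | succ k ih =>
      have : x (k + 2) - x (k + 1) = W.mulVec (x (k + 1) - x k) := by
        rw [hdyn (k + 1), hdyn k]
        ext i
        simp [Matrix.mulVec_sub]
      rw [this, ih, Matrix.mulVec_mulVec, pow_succ', mul_assoc]
  rw [Finset.mul_sum]
  refine Finset.sum_congr rfl fun k hk => ?_
  rw [mul_vecMulVec']
  congr 1
  have h0 := hker k (Finset.mem_range.mp hk)
  have hWd : W'.mulVec (x (k+1) - x k) = W.mulVec (x (k+1) - x k) := by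
    have h' : (W' - W).mulVec (x (k+1) - x k) = 0 := by
      rw [hdiff k, Matrix.mulVec_mulVec, ← mul_assoc]
      exact h0
    rw [Matrix.sub_mulVec] at h'
    exact sub_eq_zero.mp h'
  rw [hWd]
  rw [hdyn (k+1), hdyn k]
  ext i
  simp [Matrix.mulVec_sub]

/-- Theorem 2 (converse): if (W' − W)·W^k·L·x(0) = 0 for all k ∈ {0, …, m−1},
then W'·P = Q; in particular, if some W' ≠ W satisfies this condition, then the
equation X·P = Q does not have a unique n×n solution X. -/
theorem theorem2_converse (n m : ℕ) (hm : 1 ≤ m)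
    (A W : Matrix (Fin n) (Fin n) ℝ) (x : ℕ → Fin n → ℝ)
    (hdyn : ∀ k : ℕ, x (k + 1) = A.mulVec (x 0) + W.mulVec (x k))
    (L : Matrix (Fin n) (Fin n) ℝ) (hL : L = A + W - 1)
    (P Q : Matrix (Fin n) (Fin n) ℝ)
    (hP : P = ∑ k ∈ Finset.range m,
      Matrix.vecMulVec (x (k + 1) - x k) (x (k + 1) - x k))
    (hQ : Q = ∑ k ∈ Finset.range m,
      Matrix.vecMulVec (x (k + 2) - x (k + 1)) (x (k + 1) - x k))
    (W' : Matrix (Fin n) (Fin n) ℝ)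
    (hker : ∀ k < m, ((W' - W) * W ^ k * L).mulVec (x 0) = 0) :
    W' * P = Q ∧
      (W' ≠ W → ¬ ∃! X : Matrix (Fin n) (Fin n) ℝ, X * P = Q) := by
  subst hP hQ
  have h1 : W' * _ = _ := key_mulP A W x hdyn L hL W' hker
  have h2 : W * _ = _ := key_mulP (m := m) A W x hdyn L hL W (by
    intro k hk; simp [Matrix.zero_mulVec])
  refine ⟨h1, fun hne huniq => ?_⟩
  obtain ⟨X, hX, hu⟩ := huniq
  exact hne ((hu W' h1).trans (hu W h2).symm)
end

section
/- (Theorem 3) Consider parameters (w, β, γ) with encoded matrices A, W, let x : ℕ → ℝⁿ satisfy x(k+1) = A·x(0) + W·x(k) for all k ∈ ℕ, and fix m ≥ 1 with data matrices P and Q. If P is invertible, then W = Q·P⁻¹; consequently: (i) w_{i,j} = [Q·P⁻¹]_{i,j} for all i ≠ j; (ii) for every i with x_i(0) ≠ 0, γ_i = [Q·P⁻¹]_{i,i} / x_i(0); and (iii) for every i with x_i(0) ≠ 0 and every k ∈ ℕ, β_i = 1 − Σ_{j≠i} [Q·P⁻¹]_{i,j} − (x_i(k+1) − Σ_j [Q·P⁻¹]_{i,j}·x_j(k))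 / x_i(0). -/
open Matrix

/-- Encoded diagonal matrix A := diag(1 − Σ_{j≠i} w_{i,j} − β_i). -/
noncomputable def encA (n : ℕ) (w : Fin n → Fin n → ℝ) (β : Fin n → ℝ) :
    Matrix (Fin n) (Fin n) ℝ :=
  Matrix.diagonal fun i => 1 - ∑ j ∈ Finset.univ.erase i, w i j - β i

/-- Encoded matrix W with [W]_{i,i} := γ_i·x_i(0) and [W]_{i,j} := w_{i,j} for i ≠ j. -/
def encW (n : ℕ) (x₀ : Fin n → ℝ) (w : Fin n → Fin n → ℝ) (γ : Fin n → ℝ) :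
    Matrix (Fin n) (Fin n) ℝ :=
  Matrix.of fun i j => if i = j then γ i * x₀ i else w i j

/-!
The affine term `A x(0)` is the same at every step, so it cancels from consecutive
differences: `x(k+2) − x(k+1) = W (x(k+1) − x(k))`. Summing the outer products of this
identity with `x(k+1) − x(k)` gives `Q = W P`, hence `W = Q P⁻¹` when `P` is invertible.
The parameters are then read off entrywise from `W`, and `β` from one step of the dynamics.
-/

section AffineRecurrence

variable {ι R : Type*} [Fintype ι] [CommRing R]
  {x : ℕ → ι → R} {b : ι → R} {W : Matrix ι ι R}

theorem sub_succ_eq_mulVec_sub (hx : ∀ k, x (k + 1) = b + W *ᵥ x k) (k : ℕ) :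
    x (k + 2) - x (k + 1) = W *ᵥ (x (k + 1) - x k) := by
  rw [mulVec_sub, hx (k + 1), hx k]
  abel

theorem sum_vecMulVec_succ_sub_eq_mul (hx : ∀ k, x (k + 1) = b + W *ᵥ x k) (m : ℕ) :
    ∑ k ∈ Finset.range m, vecMulVec (x (k + 2) - x (k + 1)) (x (k + 1) - x k) =
      W * ∑ k ∈ Finset.range m, vecMulVec (x (k + 1) - x k) (x (k + 1) - x k) := by
  simp_rw [Finset.mul_sum, mul_vecMulVec, sub_succ_eq_mulVec_sub hx]

theorem eq_mul_inv_of_affine_recurrence [DecidableEq ι] (hx : ∀ k, x (k + 1) = b + W *ᵥ x k)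
    {m : ℕ} (hP : IsUnit (∑ k ∈ Finset.range m, vecMulVec (x (k + 1) - x k) (x (k + 1) - x k))) :
    W = (∑ k ∈ Finset.range m, vecMulVec (x (k + 2) - x (k + 1)) (x (k + 1) - x k)) *
      (∑ k ∈ Finset.range m, vecMulVec (x (k + 1) - x k) (x (k + 1) - x k))⁻¹ := by
  rw [sum_vecMulVec_succ_sub_eq_mul hx,
    mul_nonsing_inv_cancel_right _ _ ((isUnit_iff_isUnit_det _).mp hP)]

end AffineRecurrence

section Encoding

variable {n : ℕ} {x₀ : Fin n → ℝ} {w : Fin n → Fin n → ℝ} {β γ : Fin n → ℝ}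

theorem encW_apply_of_ne {i j : Fin n} (hij : i ≠ j) : encW n x₀ w γ i j = w i j :=
  if_neg hij

theorem encW_apply_self (i : Fin n) : encW n x₀ w γ i i = γ i * x₀ i :=
  if_pos rfl

theorem encA_mulVec_apply (v : Fin n → ℝ) (i : Fin n) :
    (encA n w β *ᵥ v) i = (1 - ∑ j ∈ Finset.univ.erase i, w i j - β i) * v i :=
  mulVec_diagonal _ _ _

theorem beta_eq_sub_div_of_step {W : Matrix (Fin n) (Fin n) ℝ} {y v : Fin n → ℝ}
    (hy : y = encA n w β *ᵥ x₀ + W *ᵥ v) {i : Fin n} (hi : x₀ i ≠ 0) :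
    β i = 1 - ∑ j ∈ Finset.univ.erase i, w i j - (y i - (W *ᵥ v) i) / x₀ i := by
  rw [hy, Pi.add_apply, encA_mulVec_apply, add_sub_cancel_right, mul_div_cancel_right₀ _ hi]
  ring

end Encoding

theorem theorem3_general (n m : ℕ)
    (w : Fin n → Fin n → ℝ) (β γ : Fin n → ℝ)
    (x : ℕ → Fin n → ℝ)
    (hdyn : ∀ k : ℕ, x (k + 1) =
      (encA n w β).mulVec (x 0) + (encW n (x 0) w γ).mulVec (x k))
    (P Q : Matrix (Fin n) (Fin n) ℝ)
    (hP : P = ∑ k ∈ Finset.range m,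
      Matrix.vecMulVec (x (k + 1) - x k) (x (k + 1) - x k))
    (hQ : Q = ∑ k ∈ Finset.range m,
      Matrix.vecMulVec (x (k + 2) - x (k + 1)) (x (k + 1) - x k))
    (hPinv : IsUnit P) :
    encW n (x 0) w γ = Q * P⁻¹ ∧
      (∀ i j, i ≠ j → w i j = (Q * P⁻¹) i j) ∧
      (∀ i, x 0 i ≠ 0 → γ i = (Q * P⁻¹) i i / x 0 i) ∧
      (∀ i, x 0 i ≠ 0 → ∀ k : ℕ,
        β i = 1 - (∑ j ∈ Finset.univ.erase i, (Q * P⁻¹) i j) -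
          (x (k + 1) i - ∑ j, (Q * P⁻¹) i j * x k j) / x 0 i) := by
  subst hP hQ
  have hW := eq_mul_inv_of_affine_recurrence hdyn hPinv
  rw [← hW]
  have hw : ∀ i j, i ≠ j → w i j = encW n (x 0) w γ i j := fun i j hij =>
    (encW_apply_of_ne hij).symm
  refine ⟨rfl, hw, fun i hi => ?_, fun i hi k => ?_⟩
  · rw [encW_apply_self, mul_div_cancel_right₀ _ hi]
  · rw [Finset.sum_congr rfl fun j hj => (hw i j (Finset.ne_of_mem_erase hj).symm).symm]
    exact beta_eq_sub_div_of_step (hdyn k) hi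

/-- Theorem 3: if P is invertible then W = Q·P⁻¹, and the network topology and
the confirmation-bias parameters are exactly inferred from Q·P⁻¹. -/
theorem theorem3 (n m : ℕ) (hn : 1 ≤ n) (hm : 1 ≤ m)
    (w : Fin n → Fin n → ℝ) (β γ : Fin n → ℝ)
    (x : ℕ → Fin n → ℝ)
    (hdyn : ∀ k : ℕ, x (k + 1) =
      (encA n w β).mulVec (x 0) + (encW n (x 0) w γ).mulVec (x k))
    (P Q : Matrix (Fin n) (Fin n) ℝ)
    (hP : P = ∑ k ∈ Finset.range m,
      Matrix.vecMulVec (x (k + 1) - x k) (x (k + 1) - x k))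
    (hQ : Q = ∑ k ∈ Finset.range m,
      Matrix.vecMulVec (x (k + 2) - x (k + 1)) (x (k + 1) - x k))
    (hPinv : IsUnit P) :
    encW n (x 0) w γ = Q * P⁻¹ ∧
      (∀ i j, i ≠ j → w i j = (Q * P⁻¹) i j) ∧
      (∀ i, x 0 i ≠ 0 → γ i = (Q * P⁻¹) i i / x 0 i) ∧
      (∀ i, x 0 i ≠ 0 → ∀ k : ℕ,
        β i = 1 - (∑ j ∈ Finset.univ.erase i, (Q * P⁻¹) i j) -
          (x (k + 1) i - ∑ j, (Q * P⁻¹) i j * x k j) / x 0 i) :=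
  theorem3_general n m w β γ x hdyn P Q hP hQ hPinv
end

section
/- (Corollary, Inference Problem II) Let 𝒜 and 𝒲 be n×n real matrices and let x : ℕ → ℝⁿ satisfy x(k+1) = 𝒜·x(0) + 𝒲·x(k) for all k ∈ ℕ. Fix m ≥ 1 and form the data matrices P := Σ_{k=0}^{m−1} (x(k+1) − x(k))·(x(k+1) − x(k))ᵀ and Q := Σ_{k=0}^{m−1} (x(k+2) − x(k+1))·(x(k+1) − x(k))ᵀ. If P is invertible (rank(P) = n), then 𝒲 = Q·P⁻¹, so the network topology is exactly inferred from the data matrices. -/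
open Matrix

lemma vecMulVec_mulVec_left {n : ℕ} (A : Matrix (Fin n) (Fin n) ℝ)
    (v w : Fin n → ℝ) :
    Matrix.vecMulVec (A.mulVec v) w = A * Matrix.vecMulVec v w := by
  ext i j
  simp [Matrix.vecMulVec_apply, Matrix.mul_apply, Matrix.mulVec, dotProduct,
    Finset.sum_mul, mul_assoc]

/-- Corollary (Inference Problem II): for dynamics x(k+1) = 𝒜·x(0) + 𝒲·x(k),
if the data matrix P is invertible then 𝒲 = Q·P⁻¹. -/
theorem inference_problem_II (n m : ℕ) (hm : 1 ≤ m)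
    (𝒜 𝒲 : Matrix (Fin n) (Fin n) ℝ) (x : ℕ → Fin n → ℝ)
    (hdyn : ∀ k : ℕ, x (k + 1) = 𝒜.mulVec (x 0) + 𝒲.mulVec (x k))
    (P Q : Matrix (Fin n) (Fin n) ℝ)
    (hP : P = ∑ k ∈ Finset.range m,
      Matrix.vecMulVec (x (k + 1) - x k) (x (k + 1) - x k))
    (hQ : Q = ∑ k ∈ Finset.range m,
      Matrix.vecMulVec (x (k + 2) - x (k + 1)) (x (k + 1) - x k))
    (hPinv : IsUnit P) :
    𝒲 = Q * P⁻¹ := by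
  have hdiff : ∀ k : ℕ, x (k + 2) - x (k + 1) = 𝒲.mulVec (x (k + 1) - x k) := by
    intro k
    have h1 := hdyn (k + 1)
    have h2 := hdyn k
    rw [Matrix.mulVec_sub]
    rw [h1, h2]
    abel
  have hQP : Q = 𝒲 * P := by
    rw [hQ, hP, Finset.mul_sum]
    refine Finset.sum_congr rfl fun k _ => ?_
    rw [hdiff k, vecMulVec_mulVec_left]
  rw [hQP, Matrix.mul_assoc, Matrix.mul_nonsing_inv _ ((Matrix.isUnit_iff_isUnit_det P).mp hPinv), Matrix.mul_one]
end

section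
/- (Theorem 4) Let Ă : ℕ → (n×n real matrices), let W̆ be an n×n real matrix, and suppose x : ℕ → ℝⁿ satisfies x(k+1) = Ă(k)·x(0) + W̆·x(k) for all k ∈ ℕ. Fix m, p ∈ ℕ with 1 ≤ m ≤ p and suppose P̆_{m,p} is invertible (rank n). If for some index i the row i of Ă(k) is constant in k (i.e., [Ă(k)]_{i,j} = [Ă(0)]_{i,j} for all k and j — individual i is not a follower of the information sources), then row i of W̆ is exactly recovered from the data: [W̆]_{i,j} = [Q̆_{m,p}·P̆_{m,p}⁻¹]_{i,j} for all j. -/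
open Matrix

/-- Theorem 4: for the time-varying dynamics x(k+1) = Ă(k)·x(0) + W̆·x(k) with
1 ≤ m ≤ p and P̆_{m,p} invertible, if row i of Ă(k) is constant in k (individual
i is not a follower of the information sources), then row i of W̆ is exactly
recovered: [W̆]_{i,j} = [Q̆_{m,p}·P̆_{m,p}⁻¹]_{i,j} for all j. -/
theorem theorem4 (n : ℕ)
    (Ab : ℕ → Matrix (Fin n) (Fin n) ℝ) (Wb : Matrix (Fin n) (Fin n) ℝ)
    (x : ℕ → Fin n → ℝ)
    (hdyn : ∀ k : ℕ, x (k + 1) = (Ab k).mulVec (x 0) + Wb.mulVec (x k))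
    (m p : ℕ) (hm : 1 ≤ m) (hmp : m ≤ p)
    (P Q : Matrix (Fin n) (Fin n) ℝ)
    (hP : P = ∑ k ∈ Finset.Icc m p,
      Matrix.vecMulVec (x (k + 1) - x k) (x (k + 1) - x k))
    (hQ : Q = ∑ k ∈ Finset.Icc m p,
      Matrix.vecMulVec (x (k + 2) - x (k + 1)) (x (k + 1) - x k))
    (hPinv : IsUnit P)
    (i : Fin n)
    (hrow : ∀ k : ℕ, ∀ j : Fin n, Ab k i j = Ab 0 i j) :
    ∀ j : Fin n, Wb i j = (Q * P⁻¹) i j := by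
  -- key: row i of the second difference is W applied to the first difference
  have key : ∀ k : ℕ, (x (k + 2) - x (k + 1)) i
      = Wb.mulVec (x (k + 1) - x k) i := by
    intro k
    have h1 := hdyn (k + 1)
    have h2 := hdyn k
    have hA : (Ab (k + 1)).mulVec (x 0) i = (Ab k).mulVec (x 0) i := by
      simp only [Matrix.mulVec, dotProduct]
      refine Finset.sum_congr rfl fun j _ => ?_
      rw [hrow (k + 1) j, hrow k j]
    have : x (k + 2) i - x (k + 1) i
        = Wb.mulVec (x (k + 1)) i - Wb.mulVec (x k) i := by
      have e1 : x (k + 2) i = (Ab (k+1)).mulVec (x 0) i + Wb.mulVec (x (k+1)) i := by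
        rw [show k + 2 = (k+1) + 1 from rfl, h1]; rfl
      have e2 : x (k + 1) i = (Ab k).mulVec (x 0) i + Wb.mulVec (x k) i := by
        rw [h2]; rfl
      rw [e1, e2, hA]; ring
    have hsub : Wb.mulVec (x (k + 1) - x k) i
        = Wb.mulVec (x (k + 1)) i - Wb.mulVec (x k) i := by
      rw [Matrix.mulVec_sub]; rfl
    simpa [hsub, Pi.sub_apply] using this
  -- row i of Q equals row i of Wb * P
  have hQW : ∀ j : Fin n, Q i j = (Wb * P) i j := by
    intro j
    rw [hQ, hP]
    simp only [Matrix.sum_apply, Matrix.vecMulVec_apply, Matrix.mul_apply,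
      Finset.mul_sum]
    rw [Finset.sum_comm]
    refine Finset.sum_congr rfl fun k _ => ?_
    rw [key k]
    simp only [Matrix.mulVec, dotProduct, Finset.sum_mul, mul_assoc]
  intro j
  have hPdet : IsUnit P.det := (Matrix.isUnit_iff_isUnit_det P).mp hPinv
  have hPP : P * P⁻¹ = 1 := Matrix.mul_nonsing_inv P hPdet
  have : (Q * P⁻¹) i j = (Wb * P * P⁻¹) i j := by
    simp only [Matrix.mul_apply]
    exact Finset.sum_congr rfl fun l _ => by rw [hQW l, Matrix.mul_apply]
  rw [this, Matrix.mul_assoc, hPP, Matrix.mul_one]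
end
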